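/- arXiv:2512.05157 — 4 statements merged into one kernel-verified Lean document; each statement's English description precedes it below -/
import Mathlib

section
/- (Trainability Theorem 1, one-shot game, non-discretized.) Consider a one-shot game with finite action set 𝒜, a parameterized policy π_θ that is a strictly positive probability mass function on 𝒜 differentiable in θ ∈ ℝ^d, score function S_θ(a) := ∇_θ log π_θ(a), reward function R : 𝒜 → ℝ, and gradient g_s(θ) := ∇_θ E_{A∼π_θ}[R(A)]. Assume ‖S_θ(a)‖ ≤ G_max and |R(a)| ≤ R_max for all a ∈ 𝒜. Then ‖g_s(θ)‖ ≤ √2 · G_max · R_max · √(I(A;R)), where I(A;R) is the mutual information between the random action A ∼ π_θ and the random reward R(A). -/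
open scoped BigOperators Classical

lemma loglb {x : ℝ} (hx : 0 < x) (hx1 : x ≤ 1) : 2 * (1 - x)^2 ≤ -Real.log x := by
  have hd : ∀ z : ℝ, 0 < z → HasDerivAt (fun y : ℝ => -Real.log y - 2 * (1 - y)^2)
      (-(z⁻¹) - 2 * (2 * (1 - z) ^ 1 * (0 - 1))) z := fun z hz0 =>
    ((Real.hasDerivAt_log hz0.ne').neg).sub
      ((((hasDerivAt_const z (1:ℝ)).sub (hasDerivAt_id z)).pow 2).const_mul 2)
  have key : AntitoneOn (fun y => -Real.log y - 2 * (1 - y)^2) (Set.Icc x 1) := by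
    apply antitoneOn_of_deriv_nonpos (convex_Icc x 1)
    · apply ContinuousOn.sub
      · refine (Real.continuousOn_log.mono ?_).neg
        intro z hz; simp only [Set.mem_compl_iff, Set.mem_singleton_iff]
        intro h; rw [h] at hz; exact absurd hz.1 (by linarith)
      · fun_prop
    · intro z hz
      rw [interior_Icc] at hz
      exact ((hd z (hx.trans hz.1)).differentiableAt.differentiableWithinAt)
    · intro z hz
      rw [interior_Icc] at hz
      have hz0 : 0 < z := hx.trans hz.1
      rw [(hd z hz0).deriv]
      have h4 : 4 * z * (1 - z) ≤ 1 := by nlinarith [sq_nonneg (2*z - 1)]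
      have hzi : 1 ≤ z * z⁻¹ := by rw [mul_inv_cancel₀ hz0.ne']
      nlinarith [inv_pos.2 hz0]
  have h1 := key (Set.mem_Icc.2 ⟨le_refl x, hx1⟩) (Set.mem_Icc.2 ⟨hx1, le_refl 1⟩) hx1
  simp only [Real.log_one] at h1
  nlinarith [h1]

lemma auxfin {x Gmax Rmax dl Iv : ℝ} (hG : 0 ≤ Gmax) (hR : 0 ≤ Rmax) (hdl : 0 ≤ dl)
    (hx : x ≤ 2 * Gmax * Rmax * dl) (hIv : 2 * dl ^ 2 ≤ Iv) :
    x ≤ Real.sqrt 2 * Gmax * Rmax * Real.sqrt Iv := by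
  have hI0 : 0 ≤ Iv := le_trans (by positivity) hIv
  have h1 : dl ≤ Real.sqrt (Iv / 2) := by
    rw [show dl = Real.sqrt (dl ^ 2) from (Real.sqrt_sq hdl).symm]
    exact Real.sqrt_le_sqrt (by linarith)
  have hs2 : (0:ℝ) < Real.sqrt 2 := Real.sqrt_pos.2 (by norm_num)
  have h2 : Real.sqrt 2 * Real.sqrt 2 = 2 := Real.mul_self_sqrt (by norm_num)
  have hfinal : 2 * Gmax * Rmax * Real.sqrt (Iv / 2)
      = Real.sqrt 2 * Gmax * Rmax * Real.sqrt Iv := by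
    rw [Real.sqrt_div hI0 2, div_eq_mul_inv]
    have h2' : (2:ℝ) * (Real.sqrt 2)⁻¹ = Real.sqrt 2 := by
      field_simp
      exact (Real.sq_sqrt (by norm_num)).symm
    linear_combination Gmax * Rmax * Real.sqrt Iv * h2'
  calc x ≤ 2 * Gmax * Rmax * dl := hx
    _ ≤ 2 * Gmax * Rmax * Real.sqrt (Iv / 2) := mul_le_mul_of_nonneg_left h1 (by positivity)
    _ = Real.sqrt 2 * Gmax * Rmax * Real.sqrt Iv := hfinal

/-- **Trainability Theorem 1, one-shot, non-discretized.**
For a one-shot game with finite action set, strictly positive differentiable policy `pol`,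
score `S a = ∇_θ log (pol θ a)` bounded by `Gmax`, reward `R` bounded by `Rmax`, and
gradient `g = ∇_θ E_{A∼pol θ}[R(A)]`, we have
`‖g‖ ≤ √2 · Gmax · Rmax · √(I(A;R))`, where `I(A;R)` is the mutual information between the
random action `A ∼ pol θ` and the random reward `R(A)` (joint law `p(a, y) = pol θ a · 1[y = R a]`,
marginals `pol θ` and `pR`). -/
theorem stmt3 {d : ℕ} {𝒜 : Type} [Fintype 𝒜]
    (pol : EuclideanSpace ℝ (Fin d) → 𝒜 → ℝ) (R : 𝒜 → ℝ)
    (hpos : ∀ θ a, 0 < pol θ a)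
    (hsum : ∀ θ, ∑ a, pol θ a = 1)
    (hdiff : ∀ a, Differentiable ℝ fun θ => pol θ a)
    (θ : EuclideanSpace ℝ (Fin d))
    (S : 𝒜 → EuclideanSpace ℝ (Fin d))
    (hS : ∀ a, S a = gradient (fun θ' => Real.log (pol θ' a)) θ)
    (g : EuclideanSpace ℝ (Fin d))
    (hg : g = gradient (fun θ' => ∑ a, pol θ' a * R a) θ)
    (Gmax Rmax : ℝ)
    (hGmax : ∀ a, ‖S a‖ ≤ Gmax) (hRmax : ∀ a, |R a| ≤ Rmax)
    (pR : ℝ → ℝ) (hpR : ∀ r, pR r = ∑ a, if R a = r then pol θ a else 0)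
    (I : ℝ)
    (hI : I = ∑ a, pol θ a * Real.log (pol θ a / (pol θ a * pR (R a)))) :
    ‖g‖ ≤ Real.sqrt 2 * Gmax * Rmax * Real.sqrt I := by
  classical
  rcases isEmpty_or_nonempty 𝒜 with hE | hNE
  · exact absurd (hsum θ) (by simp)
  set p : 𝒜 → ℝ := fun a => pol θ a with hp
  have hppos : ∀ a, 0 < p a := fun a => hpos θ a
  set q : 𝒜 → ℝ := fun a => pR (R a) with hqdef
  have hqform : ∀ a, q a = ∑ b, if R b = R a then p b else 0 := fun a => hpR (R a)
  have hGm0 : 0 ≤ Gmax := le_trans (norm_nonneg _) (hGmax (Classical.arbitrary 𝒜))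
  have hRm0 : 0 ≤ Rmax := le_trans (abs_nonneg _) (hRmax (Classical.arbitrary 𝒜))
  -- q bounds
  have hqpos : ∀ a, 0 < q a := by
    intro a; rw [hqform a]
    refine Finset.sum_pos' (fun b _ => ?_) ⟨a, Finset.mem_univ a, by simp [hppos a]⟩
    split
    · exact (hppos b).le
    · exact le_refl 0
  have hqle : ∀ a, q a ≤ 1 := by
    intro a; rw [hqform a, ← hsum θ]
    exact Finset.sum_le_sum fun b _ => by split <;> [exact le_refl _; exact (hppos b).le]
  -- gradients
  set gp : 𝒜 → EuclideanSpace ℝ (Fin d) := fun a => gradient (fun θ' => pol θ' a) θ with hgp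
  have hgpS : ∀ a, gp a = p a • S a := by
    intro a
    have h : fderiv ℝ (fun θ' => Real.log (pol θ' a)) θ
        = (pol θ a)⁻¹ • fderiv ℝ (fun θ' => pol θ' a) θ := by
      have := ((Real.hasDerivAt_log (hpos θ a).ne').comp_hasFDerivAt (h₂ := Real.log) θ (hdiff a θ).hasFDerivAt).fderiv
      exact this
    have hSa : S a = (p a)⁻¹ • gp a := by
      rw [hS a]
      show (InnerProductSpace.toDual ℝ _).symm _ = _
      rw [h, map_smul]; rfl
    rw [hSa, smul_smul, mul_inv_cancel₀ (hppos a).ne', one_smul]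
  have hgsum : g = ∑ a, R a • gp a := by
    have h : fderiv ℝ (fun θ' => ∑ a, pol θ' a * R a) θ
        = ∑ a, R a • fderiv ℝ (fun θ' => pol θ' a) θ := by
      rw [fderiv_fun_sum (fun a _ => ((hdiff a θ).mul_const (R a)))]
      exact Finset.sum_congr rfl fun a _ => fderiv_mul_const (hdiff a θ) (R a)
    rw [hg]
    show (InnerProductSpace.toDual ℝ _).symm _ = _
    rw [h, map_sum]
    exact Finset.sum_congr rfl fun a _ => by rw [map_smul]; rfl
  have hzero : ∑ a, gp a = 0 := by
    have h : ∑ a, fderiv ℝ (fun θ' => pol θ' a) θ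
        = fderiv ℝ (fun θ' => ∑ a, pol θ' a) θ := (fderiv_fun_sum (fun a _ => (hdiff a θ))).symm
    have h2 : fderiv ℝ (fun θ' => ∑ a, pol θ' a) θ = 0 := by
      rw [show (fun θ' => ∑ a, pol θ' a) = fun _ => (1:ℝ) from funext hsum]
      exact fderiv_const_apply 1
    calc ∑ a, gp a
        = (InnerProductSpace.toDual ℝ _).symm (∑ a, fderiv ℝ (fun θ' => pol θ' a) θ) := by
          rw [map_sum]; rfl
      _ = 0 := by rw [h, h2, map_zero]
  -- baseline subtraction
  set μ : ℝ := ∑ b, p b * R b with hμ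
  have hgrep : g = ∑ a, (p a * (R a - μ)) • S a := by
    have h0 : ∑ a, (p a * μ) • S a = 0 := by
      have : ∑ a, (p a * μ) • S a = μ • ∑ a, gp a := by
        rw [Finset.smul_sum]
        exact Finset.sum_congr rfl fun a _ => by rw [hgpS a, smul_smul, mul_comm]
      rw [this, hzero, smul_zero]
    have h1 : g = ∑ a, (p a * R a) • S a := by
      rw [hgsum]
      exact Finset.sum_congr rfl fun a _ => by rw [hgpS a, smul_smul, mul_comm]
    calc g = ∑ a, (p a * R a) • S a - ∑ a, (p a * μ) • S a := by rw [h1, h0, sub_zero]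
      _ = ∑ a, ((p a * R a) • S a - (p a * μ) • S a) := by rw [Finset.sum_sub_distrib]
      _ = ∑ a, (p a * (R a - μ)) • S a := by
          exact Finset.sum_congr rfl fun a _ => by rw [← sub_smul]; ring_nf
  -- per-action reward deviation bound
  have hdev : ∀ a, |R a - μ| ≤ 2 * Rmax * (1 - q a) := by
    intro a
    have hrep : R a - μ = ∑ b, p b * (R a - R b) := by
      have : ∑ b, p b * (R a - R b) = (∑ b, p b) * R a - ∑ b, p b * R b := by
        rw [Finset.sum_mul, ← Finset.sum_sub_distrib]
        exact Finset.sum_congr rfl fun b _ => by ring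
      rw [this, hsum θ, one_mul, ← hμ]
    have h1mq : 1 - q a = ∑ b, (if R b = R a then 0 else p b) := by
      have : ∀ b, (if R b = R a then (0:ℝ) else p b) = p b - (if R b = R a then p b else 0) := by
        intro b; split <;> ring
      rw [Finset.sum_congr rfl fun b _ => this b, Finset.sum_sub_distrib, hsum θ, ← hqform a]
    calc |R a - μ| = |∑ b, p b * (R a - R b)| := by rw [hrep]
      _ ≤ ∑ b, |p b * (R a - R b)| := Finset.abs_sum_le_sum_abs _ _
      _ ≤ ∑ b, (if R b = R a then 0 else p b) * (2 * Rmax) := by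
          apply Finset.sum_le_sum
          intro b _
          rcases eq_or_ne (R b) (R a) with h | h
          · simp [h]
          · rw [if_neg h, abs_mul, abs_of_pos (hppos b)]
            have : |R a - R b| ≤ 2 * Rmax := by
              obtain ⟨h1, h2⟩ := abs_le.1 (hRmax a)
              obtain ⟨h3, h4⟩ := abs_le.1 (hRmax b)
              exact abs_le.2 ⟨by linarith, by linarith⟩
            exact mul_le_mul_of_nonneg_left this (hppos b).le
      _ = 2 * Rmax * (1 - q a) := by rw [← Finset.sum_mul, ← h1mq]; ring
  -- delta
  set δ : ℝ := ∑ a, p a * (1 - q a) with hδ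
  have hδ0 : 0 ≤ δ := Finset.sum_nonneg fun a _ => by
    have := hqle a; have := hppos a; nlinarith
  -- norm bound
  have hgbound : ‖g‖ ≤ 2 * Gmax * Rmax * δ := by
    calc ‖g‖ = ‖∑ a, (p a * (R a - μ)) • S a‖ := by rw [hgrep]
      _ ≤ ∑ a, ‖(p a * (R a - μ)) • S a‖ := norm_sum_le _ _
      _ ≤ ∑ a, p a * (2 * Rmax * (1 - q a)) * Gmax := by
          apply Finset.sum_le_sum
          intro a _
          rw [norm_smul, Real.norm_eq_abs, abs_mul, abs_of_pos (hppos a)]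
          have h1 : |R a - μ| ≤ 2 * Rmax * (1 - q a) := hdev a
          have h2 : ‖S a‖ ≤ Gmax := hGmax a
          have h3 : 0 ≤ |R a - μ| := abs_nonneg _
          have h4 : 0 ≤ ‖S a‖ := norm_nonneg _
          nlinarith [hppos a, mul_le_mul h1 h2 h4 (le_trans h3 h1), (hppos a).le]
      _ = 2 * Gmax * Rmax * δ := by
          rw [hδ, Finset.mul_sum]
          exact Finset.sum_congr rfl fun a _ => by ring
  -- mutual information lower bound: 2 δ² ≤ I
  have hIrw : I = ∑ a, p a * (-(Real.log (q a))) := by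
    rw [hI]
    refine Finset.sum_congr rfl fun a _ => ?_
    have hfrac : p a / (p a * q a) = (q a)⁻¹ := by
      rw [← div_div, div_self (hppos a).ne', one_div]
    rw [show pol θ a / (pol θ a * pR (R a)) = p a / (p a * q a) from rfl, hfrac, Real.log_inv]
  have hCS : δ ^ 2 ≤ ∑ a, p a * (1 - q a)^2 := by
    have := Finset.sum_mul_sq_le_sq_mul_sq Finset.univ (fun a => Real.sqrt (p a))
      (fun a => Real.sqrt (p a) * (1 - q a))
    have e1 : ∀ a : 𝒜, Real.sqrt (p a) * (Real.sqrt (p a) * (1 - q a)) = p a * (1 - q a) := by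
      intro a; rw [← mul_assoc, Real.mul_self_sqrt (hppos a).le]
    have e2 : ∀ a : 𝒜, Real.sqrt (p a) ^ 2 = p a := fun a => Real.sq_sqrt (hppos a).le
    have e3 : ∀ a : 𝒜, (Real.sqrt (p a) * (1 - q a)) ^ 2 = p a * (1 - q a)^2 := by
      intro a; rw [mul_pow, Real.sq_sqrt (hppos a).le]
    rw [Finset.sum_congr rfl fun a _ => e1 a, Finset.sum_congr rfl fun a _ => e2 a,
      Finset.sum_congr rfl fun a _ => e3 a, hsum θ, one_mul] at this
    exact this
  have hIlb : 2 * δ ^ 2 ≤ I := by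
    have h1 : ∑ a, p a * (2 * (1 - q a)^2) ≤ I := by
      rw [hIrw]
      exact Finset.sum_le_sum fun a _ =>
        mul_le_mul_of_nonneg_left (loglb (hqpos a) (hqle a)) (hppos a).le
    have h2 : ∑ a, p a * (2 * (1 - q a)^2) = 2 * ∑ a, p a * (1 - q a)^2 := by
      rw [Finset.mul_sum]; exact Finset.sum_congr rfl fun a _ => by ring
    linarith [hCS]
  exact auxfin hGm0 hRm0 hδ0 hgbound hIlb
end

section
/- Consider a finite-horizon MDP with finite state set 𝒮 and finite action set 𝒜, a parameterized policy π_θ(a|s) > 0 differentiable in θ ∈ ℝ^d with score S_θ(s,a) := ∇_θ log π_θ(a|s), and a reward signal Y(s,a) (either the return G_t or the Q-function Q^{π_θ}) satisfying ‖S_θ(s,a)‖ ≤ G_max and |Y(s,a)| ≤ Y_max. Fix a state s and let Ỹ denote the discretization of Y into bins of width Δ with midpoint representatives. Then the per-state gradient g_s(θ) := ∇_θ E_{A∼π_θ(·|s)}[Y(s,A)] satisfies ‖g_s(θ)‖ ≤ √2 · G_max · Y_max · √(I(A; Ỹ | S = s)) + G_max · Δ. -/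
open scoped BigOperators Classical

lemma key_poly_stmt6 (u : ℝ) (h0 : 0 ≤ u) (h1 : u ≤ 1) : (1-u)*(1+u+u^2+u^3)^2 ≤ 2 := by
  nlinarith [sq_nonneg (u - 7/10), sq_nonneg (u^2 - 1/2), mul_nonneg h0 (sub_nonneg.2 h1),
    sq_nonneg (u*(1-u)), sq_nonneg ((1-u)*u^2), mul_nonneg (mul_nonneg h0 h0) (sub_nonneg.2 h1),
    sq_nonneg (u^2 - u), sq_nonneg (u^2-7*u/10), mul_nonneg (sub_nonneg.2 h1) (sq_nonneg (u-7/10)),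
    mul_nonneg h0 (sq_nonneg (u-7/10)), mul_nonneg (mul_nonneg h0 h0) (sq_nonneg (u-7/10)),
    mul_nonneg (mul_nonneg (mul_nonneg h0 h0) h0) (sq_nonneg (u-7/10))]

lemma sq_one_sub_le_neg_log_stmt6 (q : ℝ) (hq : 0 < q) (hq1 : q ≤ 1) :
    2 * (1 - q)^2 ≤ -Real.log q := by
  set u := Real.sqrt (Real.sqrt q) with hu
  have hq0 : (0:ℝ) ≤ q := hq.le
  have hsq : 0 ≤ Real.sqrt q := Real.sqrt_nonneg q
  have hu0 : 0 < u := Real.sqrt_pos.mpr (Real.sqrt_pos.mpr hq)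
  have hu2 : u^2 = Real.sqrt q := Real.sq_sqrt hsq
  have hq2 : Real.sqrt q ^ 2 = q := Real.sq_sqrt hq0
  have hq4 : q = u^4 := by nlinarith [hu2, hq2]
  have hlog : Real.log q = 4 * Real.log u := by
    rw [hu, Real.log_sqrt hsq, Real.log_sqrt hq0]; ring
  have hle : Real.log u ≤ u - 1 := Real.log_le_sub_one_of_pos hu0
  have hu1 : u ≤ 1 := Real.sqrt_le_one.mpr (Real.sqrt_le_one.mpr hq1)
  have hkey := key_poly_stmt6 u hu0.le hu1
  have h2 : 2*(1-u^4)^2 ≤ 4*(1-u) := by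
    nlinarith [mul_le_mul_of_nonneg_left hkey (sub_nonneg.2 hu1)]
  rw [hlog, hq4]
  linarith

lemma todual_symm_smul_stmt6 {F : Type*} [NormedAddCommGroup F] [InnerProductSpace ℝ F]
    [CompleteSpace F] (c : ℝ) (L : F →L[ℝ] ℝ) :
    (InnerProductSpace.toDual ℝ F).symm (c • L) = c • (InnerProductSpace.toDual ℝ F).symm L := by
  rw [map_smulₛₗ]
  simp [starRingEnd_apply]

/-- Finite-horizon MDP with finite state set `𝒮`, finite action set `𝒜`, a
strictly positive differentiable policy `pol θ s a = π_θ(a|s)` with score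
`S s a = ∇_θ log π_θ(a|s)` bounded by `Gmax`, and a reward signal `Y` bounded by `Ymax`.
Fix a state `s`, and let `Yb s` give the bin index of `Y s a` in a partition of `[−Ymax, Ymax]`
into `B` consecutive half-open bins of width `Δ` with midpoint representatives `m k`.
Then the per-state gradient `g = ∇_θ E_{A∼π_θ(·|s)}[Y(s,A)]` satisfies
`‖g‖ ≤ √2 · Gmax · Ymax · √(I(A; Ỹ | S = s)) + Gmax · Δ`,
where the conditional mutual information is computed under the conditional law `A ∼ π_θ(·|s)`,
`Ỹ = Yb s A`. -/
theorem stmt6 {d : ℕ} {𝒮 𝒜 : Type} [Fintype 𝒮] [Fintype 𝒜]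
    (pol : EuclideanSpace ℝ (Fin d) → 𝒮 → 𝒜 → ℝ) (Y : 𝒮 → 𝒜 → ℝ)
    (hpos : ∀ θ s a, 0 < pol θ s a)
    (hsum : ∀ θ s, ∑ a, pol θ s a = 1)
    (hdiff : ∀ s a, Differentiable ℝ fun θ => pol θ s a)
    (θ : EuclideanSpace ℝ (Fin d))
    (S : 𝒮 → 𝒜 → EuclideanSpace ℝ (Fin d))
    (hS : ∀ s a, S s a = gradient (fun θ' => Real.log (pol θ' s a)) θ)
    (Gmax Ymax : ℝ)
    (hGmax : ∀ s a, ‖S s a‖ ≤ Gmax) (hYmax : ∀ s a, |Y s a| ≤ Ymax)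
    (s : 𝒮)
    (g : EuclideanSpace ℝ (Fin d))
    (hg : g = gradient (fun θ' => ∑ a, pol θ' s a * Y s a) θ)
    (B : ℕ) (Δ b0 : ℝ) (hΔ : 0 < Δ)
    (Yb : 𝒮 → 𝒜 → Fin B)
    (hbin : ∀ s' a, Y s' a ∈ Set.Ico (b0 + (Yb s' a : ℕ) * Δ) (b0 + (Yb s' a : ℕ) * Δ + Δ))
    (m : Fin B → ℝ) (hm : ∀ k, m k = b0 + (k : ℕ) * Δ + Δ / 2)
    (pK : Fin B → ℝ) (hpK : ∀ k, pK k = ∑ a, if Yb s a = k then pol θ s a else 0)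
    (I : ℝ)
    (hI : I = ∑ a, pol θ s a * Real.log (pol θ s a / (pol θ s a * pK (Yb s a)))) :
    ‖g‖ ≤ Real.sqrt 2 * Gmax * Ymax * Real.sqrt I + Gmax * Δ := by
  classical
  -- 𝒜 is nonempty
  have hAne : Nonempty 𝒜 := by
    by_contra h
    rw [not_nonempty_iff] at h
    have h1 := hsum θ s
    rw [Finset.univ_eq_empty, Finset.sum_empty] at h1
    norm_num at h1
  obtain ⟨a0⟩ := hAne
  have hG0 : (0:ℝ) ≤ Gmax := le_trans (norm_nonneg _) (hGmax s a0)
  have hY0 : (0:ℝ) ≤ Ymax := le_trans (abs_nonneg _) (hYmax s a0)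
  -- gradient of pol at θ equals pol • S
  have hgradpol : ∀ a, gradient (fun θ' => pol θ' s a) θ = pol θ s a • S s a := by
    intro a
    have h1 : HasFDerivAt (fun θ' => pol θ' s a)
        (fderiv ℝ (fun θ' => pol θ' s a) θ) θ := ((hdiff s a) θ).hasFDerivAt
    have h2 : HasDerivAt Real.log (pol θ s a)⁻¹ (pol θ s a) :=
      Real.hasDerivAt_log (hpos θ s a).ne'
    have h3 : HasFDerivAt (fun θ' => Real.log (pol θ' s a))
        ((pol θ s a)⁻¹ • fderiv ℝ (fun θ' => pol θ' s a) θ) θ :=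
      by have := h2.comp_hasFDerivAt θ h1; exact this
    have h4 : S s a = (pol θ s a)⁻¹ • gradient (fun θ' => pol θ' s a) θ := by
      rw [hS s a]
      show (InnerProductSpace.toDual ℝ _).symm _ = _
      rw [h3.fderiv, todual_symm_smul_stmt6]
      rfl
    rw [h4, smul_smul, mul_inv_cancel₀ (hpos θ s a).ne', one_smul]
  -- the score has mean zero
  have hzero : ∑ a, pol θ s a • S s a = (0 : EuclideanSpace ℝ (Fin d)) := by
    have hconst : (fun θ' => ∑ a, pol θ' s a) = fun _ : EuclideanSpace ℝ (Fin d) => (1:ℝ) :=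
      funext (fun θ' => hsum θ' s)
    have hf : fderiv ℝ (fun θ' => ∑ a, pol θ' s a) θ = 0 := by
      rw [hconst]; exact fderiv_const_apply 1
    have hs2 : (∑ a, fderiv ℝ (fun θ' => pol θ' s a) θ) = 0 := by
      rw [← fderiv_fun_sum (fun a _ => ((hdiff s a) θ))]; exact hf
    calc ∑ a, pol θ s a • S s a
        = ∑ a, gradient (fun θ' => pol θ' s a) θ :=
          Finset.sum_congr rfl (fun a _ => (hgradpol a).symm)
      _ = (InnerProductSpace.toDual ℝ _).symm (∑ a, fderiv ℝ (fun θ' => pol θ' s a) θ) := by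
          rw [map_sum]; rfl
      _ = 0 := by rw [hs2]; simp
  -- policy gradient formula
  have hgexpr : g = ∑ a, (pol θ s a * Y s a) • S s a := by
    rw [hg]
    have hfd : fderiv ℝ (fun θ' => ∑ a, pol θ' s a * Y s a) θ
        = ∑ a, Y s a • fderiv ℝ (fun θ' => pol θ' s a) θ := by
      rw [fderiv_fun_sum (fun a _ => (((hdiff s a) θ).mul_const (Y s a)))]
      exact Finset.sum_congr rfl (fun a _ => fderiv_mul_const ((hdiff s a) θ) (Y s a))
    show (InnerProductSpace.toDual ℝ _).symm _ = _
    rw [hfd, map_sum]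
    refine Finset.sum_congr rfl (fun a _ => ?_)
    rw [todual_symm_smul_stmt6]
    have : (InnerProductSpace.toDual ℝ _).symm (fderiv ℝ (fun θ' => pol θ' s a) θ)
        = gradient (fun θ' => pol θ' s a) θ := rfl
    rw [this, hgradpol a, smul_smul, mul_comm]
  -- basic facts about pK
  have hpK_nonneg : ∀ k, 0 ≤ pK k := by
    intro k; rw [hpK]
    exact Finset.sum_nonneg (fun a _ => by
      split
      · exact (hpos θ s a).le
      · exact le_refl 0)
  have hq_pos : ∀ a, 0 < pK (Yb s a) := by
    intro a
    have h1 : pol θ s a ≤ pK (Yb s a) := by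
      rw [hpK]
      have := Finset.single_le_sum
        (f := fun a' => if Yb s a' = Yb s a then pol θ s a' else 0)
        (fun i _ => by
          split
          · exact (hpos θ s i).le
          · exact le_refl 0) (Finset.mem_univ a)
      simpa using this
    exact lt_of_lt_of_le (hpos θ s a) h1
  have hq_le1 : ∀ k, pK k ≤ 1 := by
    intro k
    rw [hpK, ← hsum θ s]
    refine Finset.sum_le_sum (fun a _ => ?_)
    split
    · exact le_refl _
    · exact (hpos θ s a).le
  have hsumpK : ∑ k, pK k = 1 := by
    rw [show ∑ k, pK k = ∑ k, ∑ a, if Yb s a = k then pol θ s a else 0 from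
      Finset.sum_congr rfl (fun k _ => hpK k)]
    rw [Finset.sum_comm, ← hsum θ s]
    exact Finset.sum_congr rfl (fun a _ => by simp)
  -- rewrite mutual information
  have hIexpr : I = ∑ a, pol θ s a * (-Real.log (pK (Yb s a))) := by
    rw [hI]
    refine Finset.sum_congr rfl (fun a _ => ?_)
    congr 1
    rw [show pol θ s a / (pol θ s a * pK (Yb s a)) = (pK (Yb s a))⁻¹ by
      rw [div_mul_eq_div_div, div_self (hpos θ s a).ne', one_div]]
    exact Real.log_inv _
  have hI0 : 0 ≤ I := by
    rw [hIexpr]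
    refine Finset.sum_nonneg (fun a _ => mul_nonneg (hpos θ s a).le ?_)
    simpa using Real.log_nonpos (hq_pos a).le (hq_le1 _)
  -- the clipped bin representative
  set Yhat : Fin B → ℝ := fun k => max (-Ymax) (min Ymax (m k)) with hYhat
  have hYhat_abs : ∀ k, |Yhat k| ≤ Ymax := by
    intro k
    rw [abs_le]
    constructor
    · exact le_max_left _ _
    · exact max_le (by linarith) (min_le_left _ _)
  have hclose : ∀ a, |Y s a - Yhat (Yb s a)| ≤ Δ / 2 := by
    intro a
    obtain ⟨hb1, hb2⟩ := hbin s a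
    have hmk := hm (Yb s a)
    have hya := abs_le.mp (hYmax s a)
    rw [abs_le]
    show -(Δ/2) ≤ Y s a - max (-Ymax) (min Ymax (m (Yb s a)))
      ∧ Y s a - max (-Ymax) (min Ymax (m (Yb s a))) ≤ Δ/2
    rcases le_or_gt (m (Yb s a)) Ymax with h1 | h1
    · rcases le_or_gt (-Ymax) (m (Yb s a)) with h2 | h2
      · rw [min_eq_right h1, max_eq_right h2]
        constructor <;> linarith
      · rw [min_eq_right h1, max_eq_left h2.le]
        constructor <;> linarith
    · rw [min_eq_left h1.le, max_eq_right (by linarith : -Ymax ≤ Ymax)]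
      constructor <;> linarith
  -- the centering constant
  set c : ℝ := ∑ k, pK k * Yhat k with hc
  have hYc : ∀ a, |Yhat (Yb s a) - c| ≤ 2 * Ymax * (1 - pK (Yb s a)) := by
    intro a
    have h1 : Yhat (Yb s a) - c = ∑ k, pK k * (Yhat (Yb s a) - Yhat k) := by
      rw [hc]
      rw [show (∑ k, pK k * (Yhat (Yb s a) - Yhat k))
          = (∑ k, pK k) * Yhat (Yb s a) - ∑ k, pK k * Yhat k by
        rw [Finset.sum_mul, ← Finset.sum_sub_distrib]
        exact Finset.sum_congr rfl (fun k _ => by ring)]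
      rw [hsumpK]; ring
    rw [h1]
    calc |∑ k, pK k * (Yhat (Yb s a) - Yhat k)|
        ≤ ∑ k, |pK k * (Yhat (Yb s a) - Yhat k)| := Finset.abs_sum_le_sum_abs _ _
      _ ≤ ∑ k, pK k * (if k = Yb s a then 0 else 2*Ymax) := by
          refine Finset.sum_le_sum (fun k _ => ?_)
          rw [abs_mul, abs_of_nonneg (hpK_nonneg k)]
          refine mul_le_mul_of_nonneg_left ?_ (hpK_nonneg k)
          split
          · rename_i hk; rw [hk]; simp
          · calc |Yhat (Yb s a) - Yhat k| ≤ |Yhat (Yb s a)| + |Yhat k| := abs_sub _ _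
              _ ≤ 2*Ymax := by have := hYhat_abs (Yb s a); have := hYhat_abs k; linarith
      _ = (∑ k, pK k) * (2*Ymax) - pK (Yb s a) * (2*Ymax) := by
          rw [show (∑ k, pK k * (if k = Yb s a then 0 else 2*Ymax))
              = ∑ k, (pK k * (2*Ymax) - (if k = Yb s a then pK k * (2*Ymax) else 0)) from
            Finset.sum_congr rfl (fun k _ => by split <;> simp)]
          rw [Finset.sum_sub_distrib, ← Finset.sum_mul,
            Finset.sum_ite_eq' Finset.univ (Yb s a) (fun k => pK k * (2*Ymax))]
          simp
      _ = 2 * Ymax * (1 - pK (Yb s a)) := by rw [hsumpK]; ring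
  -- split g into discretization part and covariance part
  have hsplit : g = (∑ a, (pol θ s a * (Y s a - Yhat (Yb s a))) • S s a)
      + ∑ a, (pol θ s a * (Yhat (Yb s a) - c)) • S s a := by
    rw [hgexpr]
    have hterm : ∀ a : 𝒜, (pol θ s a * Y s a) • S s a
        = ((pol θ s a * (Y s a - Yhat (Yb s a))) • S s a
          + (pol θ s a * (Yhat (Yb s a) - c)) • S s a) + (c * pol θ s a) • S s a := by
      intro a
      rw [← add_smul, ← add_smul]
      congr 1
      ring
    rw [Finset.sum_congr rfl (fun a _ => hterm a), Finset.sum_add_distrib,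
      Finset.sum_add_distrib]
    have hlast : ∑ a, (c * pol θ s a) • S s a = (0 : EuclideanSpace ℝ (Fin d)) := by
      rw [show ∑ a, (c * pol θ s a) • S s a = c • ∑ a, pol θ s a • S s a by
        rw [Finset.smul_sum]
        exact Finset.sum_congr rfl (fun a _ => by rw [smul_smul])]
      rw [hzero, smul_zero]
    rw [hlast, add_zero]
  -- bound the discretization part
  have hb1 : ‖∑ a, (pol θ s a * (Y s a - Yhat (Yb s a))) • S s a‖ ≤ Gmax * (Δ/2) := by
    calc ‖∑ a, (pol θ s a * (Y s a - Yhat (Yb s a))) • S s a‖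
        ≤ ∑ a, ‖(pol θ s a * (Y s a - Yhat (Yb s a))) • S s a‖ := norm_sum_le _ _
      _ ≤ ∑ a, pol θ s a * (Δ/2) * Gmax := by
          refine Finset.sum_le_sum (fun a _ => ?_)
          rw [norm_smul, Real.norm_eq_abs, abs_mul, abs_of_pos (hpos θ s a)]
          refine mul_le_mul (mul_le_mul_of_nonneg_left (hclose a) (hpos θ s a).le)
            (hGmax s a) (norm_nonneg _) ?_
          exact mul_nonneg (hpos θ s a).le (by linarith)
      _ = Gmax * (Δ/2) := by
          rw [← Finset.sum_mul, ← Finset.sum_mul, hsum θ s]; ring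
  -- bound the covariance part
  set D : ℝ := ∑ a, pol θ s a * (1 - pK (Yb s a)) with hD
  have hb2 : ‖∑ a, (pol θ s a * (Yhat (Yb s a) - c)) • S s a‖ ≤ Gmax * (2 * Ymax * D) := by
    calc ‖∑ a, (pol θ s a * (Yhat (Yb s a) - c)) • S s a‖
        ≤ ∑ a, ‖(pol θ s a * (Yhat (Yb s a) - c)) • S s a‖ := norm_sum_le _ _
      _ ≤ ∑ a, pol θ s a * (2 * Ymax * (1 - pK (Yb s a))) * Gmax := by
          refine Finset.sum_le_sum (fun a _ => ?_)
          rw [norm_smul, Real.norm_eq_abs, abs_mul, abs_of_pos (hpos θ s a)]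
          refine mul_le_mul (mul_le_mul_of_nonneg_left (hYc a) (hpos θ s a).le)
            (hGmax s a) (norm_nonneg _) ?_
          refine mul_nonneg (hpos θ s a).le ?_
          have := hYc a
          have := abs_nonneg (Yhat (Yb s a) - c)
          linarith
      _ = Gmax * (2 * Ymax * D) := by
          rw [hD]
          rw [show (2:ℝ) * Ymax * ∑ a, pol θ s a * (1 - pK (Yb s a))
              = ∑ a, 2 * Ymax * (pol θ s a * (1 - pK (Yb s a))) from Finset.mul_sum _ _ _]
          rw [Finset.mul_sum]
          exact Finset.sum_congr rfl (fun a _ => by ring)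
  -- bound D via Cauchy-Schwarz and the scalar inequality
  have hD0 : 0 ≤ D := by
    rw [hD]
    refine Finset.sum_nonneg (fun a _ => mul_nonneg (hpos θ s a).le ?_)
    have := hq_le1 (Yb s a); linarith
  have hDsq : D^2 ≤ I/2 := by
    have hcs : D^2 ≤ (∑ a, pol θ s a) * (∑ a, pol θ s a * (1 - pK (Yb s a))^2) := by
      refine Finset.sum_sq_le_sum_mul_sum_of_sq_eq_mul Finset.univ
        (fun a _ => (hpos θ s a).le)
        (fun a _ => mul_nonneg (hpos θ s a).le (sq_nonneg _)) (fun a _ => by ring)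
    rw [hsum θ s, one_mul] at hcs
    have h2 : (∑ a, pol θ s a * (1 - pK (Yb s a))^2) ≤ I/2 := by
      rw [hIexpr]
      rw [show (∑ a, pol θ s a * (-Real.log (pK (Yb s a))))/2
          = ∑ a, pol θ s a * ((-Real.log (pK (Yb s a)))/2) by
        rw [Finset.sum_div]; exact Finset.sum_congr rfl (fun a _ => by ring)]
      refine Finset.sum_le_sum (fun a _ => ?_)
      refine mul_le_mul_of_nonneg_left ?_ (hpos θ s a).le
      have := sq_one_sub_le_neg_log_stmt6 (pK (Yb s a)) (hq_pos a) (hq_le1 _)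
      linarith
    linarith
  have hDle : D ≤ Real.sqrt (I/2) := by
    have h1 : Real.sqrt (D^2) ≤ Real.sqrt (I/2) := Real.sqrt_le_sqrt hDsq
    rwa [Real.sqrt_sq hD0] at h1
  -- final assembly
  have h2D : 2 * D ≤ Real.sqrt 2 * Real.sqrt I := by
    have h2 : Real.sqrt 2 * Real.sqrt I = Real.sqrt (2*I) := (Real.sqrt_mul (by norm_num) I).symm
    have h3 : Real.sqrt (I/2) * 2 = Real.sqrt (2*I) := by
      rw [show (2:ℝ)*I = (I/2)*2^2 by ring, Real.sqrt_mul (by positivity) (2^2),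
        Real.sqrt_sq (by norm_num : (0:ℝ) ≤ 2)]
    rw [h2, ← h3]
    linarith
  have hfin : Gmax * (2 * Ymax * D) ≤ Real.sqrt 2 * Gmax * Ymax * Real.sqrt I := by
    have h1 : Ymax * (2 * D) ≤ Ymax * (Real.sqrt 2 * Real.sqrt I) :=
      mul_le_mul_of_nonneg_left h2D hY0
    have h2 : Gmax * (Ymax * (2*D)) ≤ Gmax * (Ymax * (Real.sqrt 2 * Real.sqrt I)) :=
      mul_le_mul_of_nonneg_left h1 hG0
    calc Gmax * (2 * Ymax * D) = Gmax * (Ymax * (2*D)) := by ring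
      _ ≤ Gmax * (Ymax * (Real.sqrt 2 * Real.sqrt I)) := h2
      _ = Real.sqrt 2 * Gmax * Ymax * Real.sqrt I := by ring
  calc ‖g‖ = ‖(∑ a, (pol θ s a * (Y s a - Yhat (Yb s a))) • S s a)
      + ∑ a, (pol θ s a * (Yhat (Yb s a) - c)) • S s a‖ := by rw [hsplit]
    _ ≤ ‖∑ a, (pol θ s a * (Y s a - Yhat (Yb s a))) • S s a‖
        + ‖∑ a, (pol θ s a * (Yhat (Yb s a) - c)) • S s a‖ := norm_add_le _ _
    _ ≤ Gmax * (Δ/2) + Gmax * (2 * Ymax * D) := add_le_add hb1 hb2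
    _ ≤ Real.sqrt 2 * Gmax * Ymax * Real.sqrt I + Gmax * Δ := by
        have : Gmax * (Δ/2) ≤ Gmax * Δ := by nlinarith
        linarith
end

section
/- In a finite-horizon MDP with finite state and action sets, horizon T, discount γ ∈ [0,1), reward function R, and a strictly positive parameterized policy π_θ(a|s) differentiable in θ, consider trajectories generated by following π_θ. Then for every timestep t and every j < t, E[∇_θ log π_θ(a_t | s_t) · γ^j R(s_j, a_j)] = 0; consequently E[∇_θ log π_θ(a_t|s_t) · Σ_{j<t} γ^j R(s_j,a_j)] = 0. -/
open scoped BigOperators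

section MDP

variable {𝒮 𝒜 : Type} [Fintype 𝒮] [Fintype 𝒜] [DecidableEq 𝒮] [DecidableEq 𝒜]
  [Inhabited 𝒮] [Inhabited 𝒜]

/-- The `t`-th state–action pair of a finite-horizon trajectory. -/
def step {T : ℕ} (τ : Fin T → 𝒮 × 𝒜) (t : ℕ) : 𝒮 × 𝒜 :=
  if h : t < T then τ ⟨t, h⟩ else default

/-- Probability of a length-`T` trajectory under initial distribution `μ0`, transition
kernel `P` and policy `polθ`. -/
def trajProb (T : ℕ) (μ0 : 𝒮 → ℝ) (P : 𝒮 → 𝒜 → 𝒮 → ℝ) (polθ : 𝒮 → 𝒜 → ℝ)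
    (τ : Fin T → 𝒮 × 𝒜) : ℝ :=
  μ0 (step τ 0).1 * (∏ t ∈ Finset.range T, polθ (step τ t).1 (step τ t).2) *
    ∏ t ∈ Finset.range (T - 1), P (step τ t).1 (step τ t).2 (step τ (t + 1)).1

lemma step_lt {n : ℕ} (τ : Fin n → 𝒮 × 𝒜) {i : ℕ} (h : i < n) :
    step τ i = τ ⟨i, h⟩ := dif_pos h

lemma step_snoc {n : ℕ} (τ : Fin n → 𝒮 × 𝒜) (x : 𝒮 × 𝒜) {i : ℕ} (h : i < n) :
    step (Fin.snoc τ x : Fin (n + 1) → 𝒮 × 𝒜) i = step τ i := by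
  rw [step_lt _ (h.trans (Nat.lt_succ_self n)), step_lt _ h]
  have : (⟨i, h.trans (Nat.lt_succ_self n)⟩ : Fin (n + 1)) = Fin.castSucc ⟨i, h⟩ := rfl
  rw [this, Fin.snoc_castSucc]

lemma step_snoc_last {n : ℕ} (τ : Fin n → 𝒮 × 𝒜) (x : 𝒮 × 𝒜) :
    step (Fin.snoc τ x : Fin (n + 1) → 𝒮 × 𝒜) n = x := by
  rw [step_lt _ (Nat.lt_succ_self n)]
  have : (⟨n, Nat.lt_succ_self n⟩ : Fin (n + 1)) = Fin.last n := rfl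
  rw [this, Fin.snoc_last]

lemma step_init {n : ℕ} (τ : Fin (n + 1) → 𝒮 × 𝒜) {i : ℕ} (h : i < n) :
    step (Fin.init τ) i = step τ i := by
  rw [step_lt _ h, step_lt _ (h.trans (Nat.lt_succ_self n))]
  rfl

/-- The snoc equivalence. -/
def snocEquiv (n : ℕ) : ((Fin n → 𝒮 × 𝒜) × (𝒮 × 𝒜)) ≃ (Fin (n + 1) → 𝒮 × 𝒜) where
  toFun p := Fin.snoc p.1 p.2
  invFun τ := (Fin.init τ, τ (Fin.last n))
  left_inv p := by simp
  right_inv τ := by simp [Fin.snoc_init_self]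

lemma trajProb_snoc (k : ℕ) (μ0 : 𝒮 → ℝ) (P : 𝒮 → 𝒜 → 𝒮 → ℝ) (p : 𝒮 → 𝒜 → ℝ)
    (τ : Fin (k + 1) → 𝒮 × 𝒜) (x : 𝒮 × 𝒜) :
    trajProb (k + 2) μ0 P p (Fin.snoc τ x) =
      trajProb (k + 1) μ0 P p τ * (P (step τ k).1 (step τ k).2 x.1 * p x.1 x.2) := by
  unfold trajProb
  have h0 : (k : ℕ) + 2 - 1 = k + 1 := rfl
  rw [h0,
    Finset.prod_range_succ
      (f := fun i => p (step (Fin.snoc τ x : Fin (k + 2) → 𝒮 × 𝒜) i).1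
        (step (Fin.snoc τ x : Fin (k + 2) → 𝒮 × 𝒜) i).2) (n := k + 1),
    Finset.prod_range_succ
      (f := fun i => P (step (Fin.snoc τ x : Fin (k + 2) → 𝒮 × 𝒜) i).1
        (step (Fin.snoc τ x : Fin (k + 2) → 𝒮 × 𝒜) i).2
        (step (Fin.snoc τ x : Fin (k + 2) → 𝒮 × 𝒜) (i + 1)).1) (n := k)]
  have hp : ∀ i ∈ Finset.range (k + 1),
      p (step (Fin.snoc τ x : Fin (k + 2) → 𝒮 × 𝒜) i).1 (step (Fin.snoc τ x : Fin (k + 2) → 𝒮 × 𝒜) i).2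
        = p (step τ i).1 (step τ i).2 := by
    intro i hi
    rw [step_snoc τ x (Finset.mem_range.mp hi)]
  have hP : ∀ i ∈ Finset.range k,
      P (step (Fin.snoc τ x : Fin (k + 2) → 𝒮 × 𝒜) i).1 (step (Fin.snoc τ x : Fin (k + 2) → 𝒮 × 𝒜) i).2
          (step (Fin.snoc τ x : Fin (k + 2) → 𝒮 × 𝒜) (i + 1)).1
        = P (step τ i).1 (step τ i).2 (step τ (i + 1)).1 := by
    intro i hi
    have hi' := Finset.mem_range.mp hi
    rw [step_snoc τ x (hi'.trans (Nat.lt_succ_self k)), step_snoc τ x (Nat.succ_lt_succ hi')]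
  rw [Finset.prod_congr rfl hp, Finset.prod_congr rfl hP,
    step_snoc τ x (Nat.succ_pos k), step_snoc τ x (Nat.lt_succ_self k), step_snoc_last]
  have h1 : (k : ℕ) + 1 - 1 = k := rfl
  rw [h1]
  ring

/-- Marginalizing out the last step of a trajectory. -/
lemma marg {E : Type*} [AddCommGroup E] [Module ℝ E] (n : ℕ) (hn : 1 ≤ n)
    (μ0 : 𝒮 → ℝ) (P : 𝒮 → 𝒜 → 𝒮 → ℝ) (hPsum : ∀ s a, ∑ s', P s a s' = 1)
    (p : 𝒮 → 𝒜 → ℝ) (hp : ∀ s, ∑ a, p s a = 1)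
    (F : (Fin n → 𝒮 × 𝒜) → E) :
    ∑ τ : Fin (n + 1) → 𝒮 × 𝒜, trajProb (n + 1) μ0 P p τ • F (Fin.init τ)
      = ∑ τ : Fin n → 𝒮 × 𝒜, trajProb n μ0 P p τ • F τ := by
  obtain ⟨k, rfl⟩ : ∃ k, n = k + 1 := ⟨n - 1, by omega⟩
  rw [← Equiv.sum_comp (snocEquiv (k + 1))
    (fun τ => trajProb (k + 2) μ0 P p τ • F (Fin.init τ)), Fintype.sum_prod_type]
  refine Finset.sum_congr rfl fun τ _ => ?_
  have hinit : ∀ x : 𝒮 × 𝒜, Fin.init (Fin.snoc τ x : Fin (k + 2) → 𝒮 × 𝒜) = τ := by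
    intro x; simp
  calc ∑ x : 𝒮 × 𝒜, trajProb (k + 2) μ0 P p (snocEquiv (k + 1) (τ, x)) •
        F (Fin.init (snocEquiv (k + 1) (τ, x)))
      = ∑ x : 𝒮 × 𝒜, (trajProb (k + 1) μ0 P p τ *
          (P (step τ k).1 (step τ k).2 x.1 * p x.1 x.2)) • F τ := by
        refine Finset.sum_congr rfl fun x _ => ?_
        show trajProb (k + 2) μ0 P p (Fin.snoc τ x) • F (Fin.init (Fin.snoc τ x : Fin (k+2) → 𝒮 × 𝒜)) = _
        rw [trajProb_snoc, hinit]
    _ = (∑ x : 𝒮 × 𝒜, trajProb (k + 1) μ0 P p τ *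
          (P (step τ k).1 (step τ k).2 x.1 * p x.1 x.2)) • F τ := by
        rw [Finset.sum_smul]
    _ = trajProb (k + 1) μ0 P p τ • F τ := by
        congr 1
        rw [← Finset.mul_sum, Fintype.sum_prod_type]
        have : ∀ s : 𝒮, ∑ a : 𝒜, P (step τ k).1 (step τ k).2 s * p s a
            = P (step τ k).1 (step τ k).2 s := by
          intro s; rw [← Finset.mul_sum, hp, mul_one]
        simp only [this, hPsum, mul_one]

end MDP

section MDP2

variable {𝒮 𝒜 : Type} [Fintype 𝒮] [Fintype 𝒜] [DecidableEq 𝒮] [DecidableEq 𝒜]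
  [Inhabited 𝒮] [Inhabited 𝒜]

/-- The score-function identity: the policy-weighted sum of gradients of log-policy is zero. -/
lemma sum_smul_gradLog {d : ℕ} (pol : EuclideanSpace ℝ (Fin d) → 𝒮 → 𝒜 → ℝ)
    (hpos : ∀ θ s a, 0 < pol θ s a)
    (hsum : ∀ θ s, ∑ a, pol θ s a = 1)
    (hdiff : ∀ s a, Differentiable ℝ fun θ => pol θ s a)
    (θ : EuclideanSpace ℝ (Fin d)) (s : 𝒮) :
    ∑ a : 𝒜, pol θ s a • gradient (fun θ' => Real.log (pol θ' s a)) θ = 0 := by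
  have hg : ∀ a : 𝒜, gradient (fun θ' => Real.log (pol θ' s a)) θ
      = (InnerProductSpace.toDual ℝ (EuclideanSpace ℝ (Fin d))).symm
          ((pol θ s a)⁻¹ • fderiv ℝ (fun θ' => pol θ' s a) θ) := by
    intro a
    have h := ((hdiff s a θ).hasFDerivAt).log (ne_of_gt (hpos θ s a))
    rw [gradient, h.fderiv]
  calc ∑ a : 𝒜, pol θ s a • gradient (fun θ' => Real.log (pol θ' s a)) θ
      = (InnerProductSpace.toDual ℝ (EuclideanSpace ℝ (Fin d))).symm
          (∑ a : 𝒜, fderiv ℝ (fun θ' => pol θ' s a) θ) := by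
        rw [map_sum]
        refine Finset.sum_congr rfl fun a _ => ?_
        rw [hg a, ← map_smul, smul_smul, mul_inv_cancel₀ (ne_of_gt (hpos θ s a)), one_smul]
    _ = 0 := by
        rw [← fderiv_fun_sum (fun a _ => (hdiff s a θ))]
        have : (fun θ' => ∑ a : 𝒜, pol θ' s a) = fun _ => (1 : ℝ) := by
          funext θ'; exact hsum θ' s
        rw [this, fderiv_fun_const]
        simp

lemma key {d : ℕ} (t' m : ℕ)
    (μ0 : 𝒮 → ℝ) (P : 𝒮 → 𝒜 → 𝒮 → ℝ) (hPsum : ∀ s a, ∑ s', P s a s' = 1)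
    (pol : EuclideanSpace ℝ (Fin d) → 𝒮 → 𝒜 → ℝ)
    (hpos : ∀ θ s a, 0 < pol θ s a)
    (hsum : ∀ θ s, ∑ a, pol θ s a = 1)
    (hdiff : ∀ s a, Differentiable ℝ fun θ => pol θ s a)
    (θ : EuclideanSpace ℝ (Fin d))
    (c : (Fin (t' + 1) → 𝒮 × 𝒜) → ℝ) :
    ∑ τ : Fin (t' + 2 + m) → 𝒮 × 𝒜, trajProb (t' + 2 + m) μ0 P (pol θ) τ •
      (c (fun i : Fin (t' + 1) => step τ (i : ℕ)) •
        gradient (fun θ' => Real.log (pol θ' (step τ (t' + 1)).1 (step τ (t' + 1)).2)) θ) = 0 := by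
  induction m with
  | zero =>
    rw [← Equiv.sum_comp (snocEquiv (t' + 1))
      (fun τ => trajProb (t' + 2) μ0 P (pol θ) τ •
        (c (fun i : Fin (t' + 1) => step τ (i : ℕ)) •
          gradient (fun θ' => Real.log (pol θ' (step τ (t' + 1)).1 (step τ (t' + 1)).2)) θ)),
      Fintype.sum_prod_type]
    refine Finset.sum_eq_zero fun τ _ => ?_
    rw [Fintype.sum_prod_type]
    refine Finset.sum_eq_zero fun s _ => ?_
    have hc : ∀ x : 𝒮 × 𝒜,
        (fun i : Fin (t' + 1) => step (Fin.snoc τ x : Fin (t' + 2) → 𝒮 × 𝒜) (i : ℕ))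
          = fun i : Fin (t' + 1) => step τ (i : ℕ) := by
      intro x; funext i; exact step_snoc τ x i.isLt
    calc ∑ a : 𝒜, trajProb (t' + 2) μ0 P (pol θ) (snocEquiv (t' + 1) (τ, (s, a))) •
          (c (fun i : Fin (t' + 1) => step (snocEquiv (t' + 1) (τ, (s, a))) (i : ℕ)) •
            gradient (fun θ' => Real.log
              (pol θ' (step (snocEquiv (t' + 1) (τ, (s, a))) (t' + 1)).1
                (step (snocEquiv (t' + 1) (τ, (s, a))) (t' + 1)).2)) θ)
        = ∑ a : 𝒜, (trajProb (t' + 1) μ0 P (pol θ) τ * P (step τ t').1 (step τ t').2 s *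
            c (fun i : Fin (t' + 1) => step τ (i : ℕ))) •
              (pol θ s a • gradient (fun θ' => Real.log (pol θ' s a)) θ) := by
          refine Finset.sum_congr rfl fun a _ => ?_
          show trajProb (t' + 2) μ0 P (pol θ) (Fin.snoc τ (s, a)) •
            (c (fun i : Fin (t' + 1) => step (Fin.snoc τ (s, a) : Fin (t' + 2) → 𝒮 × 𝒜) (i : ℕ)) •
              gradient (fun θ' => Real.log
                (pol θ' (step (Fin.snoc τ (s, a) : Fin (t' + 2) → 𝒮 × 𝒜) (t' + 1)).1
                  (step (Fin.snoc τ (s, a) : Fin (t' + 2) → 𝒮 × 𝒜) (t' + 1)).2)) θ)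
            = _
          rw [trajProb_snoc, hc, step_snoc_last]
          rw [smul_smul, smul_smul]
          congr 1
          ring
      _ = 0 := by
          rw [← Finset.smul_sum, sum_smul_gradLog pol hpos hsum hdiff θ s, smul_zero]
  | succ m ih =>
    have heq : ∀ τ : Fin (t' + 2 + m + 1) → 𝒮 × 𝒜,
        (c (fun i : Fin (t' + 1) => step (Fin.init τ) (i : ℕ)) •
          gradient (fun θ' => Real.log
            (pol θ' (step (Fin.init τ) (t' + 1)).1 (step (Fin.init τ) (t' + 1)).2)) θ)
        = (c (fun i : Fin (t' + 1) => step τ (i : ℕ)) •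
          gradient (fun θ' => Real.log
            (pol θ' (step τ (t' + 1)).1 (step τ (t' + 1)).2)) θ) := by
      intro τ
      have h1 : ∀ i : Fin (t' + 1), step (Fin.init τ) (i : ℕ) = step τ (i : ℕ) := by
        intro i; exact step_init τ (by omega)
      have h2 : step (Fin.init τ) (t' + 1) = step τ (t' + 1) := step_init τ (by omega)
      rw [h2]
      congr 1
      congr 1
      funext i; exact h1 i
    calc ∑ τ : Fin (t' + 2 + m + 1) → 𝒮 × 𝒜, trajProb (t' + 2 + m + 1) μ0 P (pol θ) τ •
          (c (fun i : Fin (t' + 1) => step τ (i : ℕ)) •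
            gradient (fun θ' => Real.log (pol θ' (step τ (t' + 1)).1 (step τ (t' + 1)).2)) θ)
        = ∑ τ : Fin (t' + 2 + m + 1) → 𝒮 × 𝒜, trajProb (t' + 2 + m + 1) μ0 P (pol θ) τ •
            (c (fun i : Fin (t' + 1) => step (Fin.init τ) (i : ℕ)) •
              gradient (fun θ' => Real.log
                (pol θ' (step (Fin.init τ) (t' + 1)).1 (step (Fin.init τ) (t' + 1)).2)) θ) := by
          exact Finset.sum_congr rfl fun τ _ => by rw [heq τ]
      _ = ∑ τ : Fin (t' + 2 + m) → 𝒮 × 𝒜, trajProb (t' + 2 + m) μ0 P (pol θ) τ •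
            (c (fun i : Fin (t' + 1) => step τ (i : ℕ)) •
              gradient (fun θ' => Real.log
                (pol θ' (step τ (t' + 1)).1 (step τ (t' + 1)).2)) θ) := by
          exact marg (t' + 2 + m) (by omega) μ0 P hPsum (pol θ) (hsum θ)
            (fun τ => c (fun i : Fin (t' + 1) => step τ (i : ℕ)) •
              gradient (fun θ' => Real.log
                (pol θ' (step τ (t' + 1)).1 (step τ (t' + 1)).2)) θ)
      _ = 0 := ih

/-- In a finite-horizon MDP with trajectories generated by a strictly
positive differentiable policy `π_θ`, for every timestep `t < T` and every `j < t`,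
`E[∇_θ log π_θ(aₜ|sₜ) · γʲ R(sⱼ,aⱼ)] = 0`; consequently
`E[∇_θ log π_θ(aₜ|sₜ) · ∑_{j<t} γʲ R(sⱼ,aⱼ)] = 0`. -/
theorem stmt10 {d : ℕ} (T : ℕ) (γ : ℝ) (hγ : γ ∈ Set.Ico (0 : ℝ) 1)
    (μ0 : 𝒮 → ℝ) (hμ0 : ∀ s, 0 ≤ μ0 s) (hμ0sum : ∑ s, μ0 s = 1)
    (P : 𝒮 → 𝒜 → 𝒮 → ℝ) (hP : ∀ s a s', 0 ≤ P s a s') (hPsum : ∀ s a, ∑ s', P s a s' = 1)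
    (R : 𝒮 → 𝒜 → ℝ)
    (pol : EuclideanSpace ℝ (Fin d) → 𝒮 → 𝒜 → ℝ)
    (hpos : ∀ θ s a, 0 < pol θ s a)
    (hsum : ∀ θ s, ∑ a, pol θ s a = 1)
    (hdiff : ∀ s a, Differentiable ℝ fun θ => pol θ s a)
    (θ : EuclideanSpace ℝ (Fin d))
    (gradLog : (Fin T → 𝒮 × 𝒜) → ℕ → EuclideanSpace ℝ (Fin d))
    (hgradLog : ∀ τ t, gradLog τ t =
      gradient (fun θ' => Real.log (pol θ' (step τ t).1 (step τ t).2)) θ) :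
    (∀ t, t < T → ∀ j, j < t →
        (∑ τ : Fin T → 𝒮 × 𝒜,
          trajProb T μ0 P (pol θ) τ •
            ((γ ^ j * R (step τ j).1 (step τ j).2) • gradLog τ t)) = 0) ∧
      (∀ t, t < T →
        (∑ τ : Fin T → 𝒮 × 𝒜,
          trajProb T μ0 P (pol θ) τ •
            ((∑ j ∈ Finset.range t, γ ^ j * R (step τ j).1 (step τ j).2) •
              gradLog τ t)) = 0) := by
  constructor
  · intro t ht j hj
    obtain ⟨t', rfl⟩ : ∃ t', t = t' + 1 := ⟨t - 1, by omega⟩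
    obtain ⟨m, rfl⟩ : ∃ m, T = t' + 2 + m := ⟨T - (t' + 2), by omega⟩
    simp only [hgradLog]
    have hjt : j < t' + 1 := hj
    have := key t' m μ0 P hPsum pol hpos hsum hdiff θ
      (fun f => γ ^ j * R (f ⟨j, hjt⟩).1 (f ⟨j, hjt⟩).2)
    convert this using 3
  · intro t ht
    rcases Nat.eq_zero_or_pos t with rfl | htpos
    · simp
    obtain ⟨t', rfl⟩ : ∃ t', t = t' + 1 := ⟨t - 1, by omega⟩
    obtain ⟨m, rfl⟩ : ∃ m, T = t' + 2 + m := ⟨T - (t' + 2), by omega⟩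
    simp only [hgradLog]
    have := key t' m μ0 P hPsum pol hpos hsum hdiff θ
      (fun f => ∑ j : Fin (t' + 1), γ ^ (j : ℕ) * R (f j).1 (f j).2)
    have hrw : ∀ τ : Fin (t' + 2 + m) → 𝒮 × 𝒜,
        (∑ j ∈ Finset.range (t' + 1), γ ^ j * R (step τ j).1 (step τ j).2)
          = ∑ j : Fin (t' + 1), γ ^ (j : ℕ) * R (step τ (j : ℕ)).1 (step τ (j : ℕ)).2 := by
      intro τ
      rw [← Fin.sum_univ_eq_sum_range]
    simp only [hrw]
    convert this using 3

end MDP2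
end

section
/- (Expressivity Theorem, L2 case.) Fix a state s, a finite action set 𝒜, weights w_i(s) summing to 1, component distributions π_i^s on 𝒜 and mixture π̄^s := Σ_i w_i(s) π_i^s. Then the L2 divergence D_2(Z|s) := Σ_i w_i(s) ‖π_i^s − π̄^s‖_2² satisfies D_2(Z|s) ≤ 2 I(A; Z | S = s). Consequently, if additionally I(A; Z | Ỹ, S = s) = 0 for every s, then E_{S∼d_π}[D_2(Z|S)] ≤ 2 I(A; Z | S) ≤ 2 I(A; Ỹ | S). -/
set_option linter.unusedSectionVars false


open scoped BigOperators


private lemma gHasDeriv (y : ℝ) {t : ℝ} (ht : t ≠ 0) :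
    HasDerivAt (fun t => 2*(t * Real.log t - t * Real.log y - t + y) - (t - y)^2)
      (2*(Real.log t - Real.log y) - 2*(t - y)) t := by
  have h1 := Real.hasDerivAt_mul_log ht
  have h2 : HasDerivAt (fun t : ℝ => t * Real.log y) (1 * Real.log y) t :=
    (hasDerivAt_id t).mul_const _
  have h3 : HasDerivAt (fun t : ℝ => (t - y)^2) (2 * (t - y)^1 * 1) t :=
    ((hasDerivAt_id t).sub_const y).pow 2
  have := ((((h1.sub h2).sub (hasDerivAt_id t)).add_const y).const_mul 2).sub h3
  exact this.congr_deriv (by ring)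

private lemma keyIneq {x y : ℝ} (hx0 : 0 ≤ x) (hx1 : x ≤ 1) (hy0 : 0 ≤ y) (hy1 : y ≤ 1)
    (hsupp : y = 0 → x = 0) :
    (x - y)^2 ≤ 2 * (x * Real.log (x / y) - x + y) := by
  rcases eq_or_lt_of_le hy0 with hy|hy
  · have hx : x = 0 := hsupp hy.symm
    simp [hx, ← hy]
  rcases eq_or_lt_of_le hx0 with hx|hx
  · rw [← hx]
    simp only [zero_mul, sub_zero, zero_sub, zero_mul]
    nlinarith
  set g : ℝ → ℝ := fun t => 2*(t * Real.log t - t * Real.log y - t + y) - (t - y)^2 with hg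
  have hgy : g y = 0 := by simp [hg]
  have hlog : Real.log (x/y) = Real.log x - Real.log y := Real.log_div (ne_of_gt hx) (ne_of_gt hy)
  have main : 0 ≤ g x → (x - y)^2 ≤ 2 * (x * Real.log (x / y) - x + y) := by
    intro h
    simp only [hg, hlog] at h ⊢
    nlinarith
  apply main
  rcases le_total x y with hxy|hxy
  · have mono : AntitoneOn g (Set.Icc x y) := by
      apply antitoneOn_of_deriv_nonpos (convex_Icc x y)
      · intro t htm
        exact (gHasDeriv y (ne_of_gt (lt_of_lt_of_le hx htm.1))).differentiableAt.continuousAt.continuousWithinAt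
      · intro t htm
        rw [interior_Icc] at htm
        exact ((gHasDeriv y (ne_of_gt (lt_trans hx htm.1))).differentiableAt).differentiableWithinAt
      · intro t htm
        rw [interior_Icc] at htm
        have ht0 : 0 < t := lt_trans hx htm.1
        rw [(gHasDeriv y (ne_of_gt ht0)).deriv]
        have h1 : Real.log (t/y) ≤ t/y - 1 := Real.log_le_sub_one_of_pos (div_pos ht0 hy)
        rw [Real.log_div (ne_of_gt ht0) (ne_of_gt hy)] at h1
        have hty : t ≤ y := le_of_lt htm.2
        have : t/y - 1 ≤ t - y := by
          rw [div_sub_one (ne_of_gt hy), div_le_iff₀ hy]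
          nlinarith
        nlinarith
    have := mono (Set.left_mem_Icc.2 hxy) (Set.right_mem_Icc.2 hxy) hxy
    rw [hgy] at this; exact this
  · have mono : MonotoneOn g (Set.Icc y x) := by
      apply monotoneOn_of_deriv_nonneg (convex_Icc y x)
      · intro t htm
        exact (gHasDeriv y (ne_of_gt (lt_of_lt_of_le hy htm.1))).differentiableAt.continuousAt.continuousWithinAt
      · intro t htm
        rw [interior_Icc] at htm
        exact ((gHasDeriv y (ne_of_gt (lt_trans hy htm.1))).differentiableAt).differentiableWithinAt
      · intro t htm
        rw [interior_Icc] at htm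
        have ht0 : 0 < t := lt_trans hy htm.1
        rw [(gHasDeriv y (ne_of_gt ht0)).deriv]
        have h1 : 1 - (t/y)⁻¹ ≤ Real.log (t/y) := Real.one_sub_inv_le_log_of_pos (div_pos ht0 hy)
        rw [Real.log_div (ne_of_gt ht0) (ne_of_gt hy)] at h1
        have h2 : (t/y)⁻¹ = y/t := by rw [inv_div]
        rw [h2] at h1
        have hty : y ≤ t := htm.1.le
        have ht1 : t ≤ x := htm.2.le
        have : y/t ≤ 1 - (t - y) := by
          rw [div_le_iff₀ ht0]
          nlinarith
        nlinarith
    have := mono (Set.left_mem_Icc.2 hxy) (Set.right_mem_Icc.2 hxy) hxy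
    rw [hgy] at this; exact this

private lemma pinsker_sum {ι : Type} [Fintype ι] (f g : ι → ℝ) (hf0 : ∀ a, 0 ≤ f a)
    (hg0 : ∀ a, 0 ≤ g a) (hf1 : ∑ a, f a = 1) (hg1 : ∑ a, g a = 1)
    (hsupp : ∀ a, g a = 0 → f a = 0) :
    ∑ a, (f a - g a)^2 ≤ 2 * ∑ a, f a * Real.log (f a / g a) := by
  have hf1' : ∀ a, f a ≤ 1 := fun a =>
    hf1 ▸ Finset.single_le_sum (fun i _ => hf0 i) (Finset.mem_univ a)
  have hg1' : ∀ a, g a ≤ 1 := fun a =>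
    hg1 ▸ Finset.single_le_sum (fun i _ => hg0 i) (Finset.mem_univ a)
  have key : ∀ a ∈ (Finset.univ : Finset ι), (f a - g a)^2 ≤ 2*(f a * Real.log (f a / g a) - f a + g a) :=
    fun a _ => keyIneq (hf0 a) (hf1' a) (hg0 a) (hg1' a) (hsupp a)
  have h := Finset.sum_le_sum key
  have expand : ∑ a, 2*(f a * Real.log (f a / g a) - f a + g a)
      = 2*(∑ a, f a * Real.log (f a / g a)) - 2*(∑ a, f a) + 2*(∑ a, g a) := by
    rw [Finset.mul_sum, Finset.mul_sum, Finset.mul_sum]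
    rw [← Finset.sum_sub_distrib, ← Finset.sum_add_distrib]
    exact Finset.sum_congr rfl fun a _ => by ring

  rw [expand, hf1, hg1] at h
  linarith

private lemma div_div_div' (x y z t : ℝ) : (x/y)/(z/t) = x*t/(y*z) := by
  rw [div_eq_mul_inv, div_eq_mul_inv, div_eq_mul_inv, div_eq_mul_inv, mul_inv, inv_inv, mul_inv]
  ring

private lemma div_mulmul (x u v V : ℝ) (hV : V ≠ 0) : (x/V)/((u/V)*(v/V)) = x*V/(u*v) := by
  rw [div_mul_div_comm, div_div_div', show x*(V*V) = V*(x*V) by ring,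
    show (V:ℝ)*(u*v) = V*(u*v) from rfl, mul_div_mul_left _ _ hV]

private lemma gibbs_pt {u v : ℝ} (hu : 0 ≤ u) (hv : 0 ≤ v) (hsupp : v = 0 → u = 0) :
    u - v ≤ u * Real.log (u / v) := by
  rcases eq_or_lt_of_le hv with h|h
  · rw [hsupp h.symm]; simpa using hv
  rcases eq_or_lt_of_le hu with h'|h'
  · rw [← h']; simp; linarith
  · have h1 : 1 - (u/v)⁻¹ ≤ Real.log (u/v) := Real.one_sub_inv_le_log_of_pos (div_pos h' h)
    rw [inv_div] at h1
    have h2 := mul_le_mul_of_nonneg_left h1 h'.le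
    have h3 : u * (1 - v/u) = u - v := by field_simp
    linarith


section Expressivity

variable {σ α ζ υ : Type} [Fintype σ] [Fintype α] [Fintype ζ] [Fintype υ]

/-- Mutual information of a finitely supported joint pmf `q` on `X × Y`. -/
noncomputable def mi {X Y : Type} [Fintype X] [Fintype Y] (q : X → Y → ℝ) : ℝ :=
  ∑ x, ∑ y, q x y * Real.log (q x y / ((∑ y', q x y') * (∑ x', q x' y)))

/-- Marginal `P(S = s)` of a joint pmf `p` on `S × A × Z × Ỹ`. -/
noncomputable def pS (p : σ → α → ζ → υ → ℝ) (s : σ) : ℝ :=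
  ∑ a, ∑ z, ∑ y, p s a z y

/-- The weight `w_i(s) = P(Z = i | S = s)`. -/
noncomputable def wZ (p : σ → α → ζ → υ → ℝ) (s : σ) (z : ζ) : ℝ :=
  (∑ a, ∑ y, p s a z y) / pS p s

/-- The component distribution `π_i^s(a) = P(A = a | Z = i, S = s)`. -/
noncomputable def piComp (p : σ → α → ζ → υ → ℝ) (s : σ) (z : ζ) (a : α) : ℝ :=
  (∑ y, p s a z y) / (∑ a', ∑ y, p s a' z y)

/-- The mixture `π̄^s(a) = ∑_i w_i(s) π_i^s(a)`. -/
noncomputable def piBar (p : σ → α → ζ → υ → ℝ) (s : σ) (a : α) : ℝ :=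
  ∑ z, wZ p s z * piComp p s z a

/-- `I(A; Z | S = s) = ∑_i w_i(s) D_KL(π_i^s ‖ π̄^s)`. -/
noncomputable def miAZ (p : σ → α → ζ → υ → ℝ) (s : σ) : ℝ :=
  ∑ z, wZ p s z * ∑ a, piComp p s z a * Real.log (piComp p s z a / piBar p s a)

/-- `I(A; Ỹ | S = s)`. -/
noncomputable def miAY (p : σ → α → ζ → υ → ℝ) (s : σ) : ℝ :=
  mi fun a y => (∑ z, p s a z y) / pS p s

/-- `I(A; Z | Ỹ, S = s) = ∑_y P(Ỹ = y | S = s) · I(A; Z | Ỹ = y, S = s)`. -/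
noncomputable def miAZgY (p : σ → α → ζ → υ → ℝ) (s : σ) : ℝ :=
  ∑ y, ((∑ a, ∑ z, p s a z y) / pS p s) *
    mi fun a z => p s a z y / (∑ a', ∑ z', p s a' z' y)

/-- The L2 divergence `D_2(Z|s) = ∑_i w_i(s) ‖π_i^s − π̄^s‖₂²`. -/
noncomputable def D2 (p : σ → α → ζ → υ → ℝ) (s : σ) : ℝ :=
  ∑ z, wZ p s z * ∑ a, (piComp p s z a - piBar p s a) ^ 2

private lemma part1 (p : σ → α → ζ → υ → ℝ) (hp : ∀ s a z y, 0 ≤ p s a z y) (s : σ) :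
    D2 p s ≤ 2 * miAZ p s := by
  unfold D2 miAZ
  rw [Finset.mul_sum]
  apply Finset.sum_le_sum
  intro z _
  by_cases hz : (∑ a, ∑ y, p s a z y) = 0
  · simp [wZ, hz, zero_div]
  · have hNZnn : ∀ z', (0:ℝ) ≤ ∑ a, ∑ y, p s a z' y :=
      fun z' => Finset.sum_nonneg fun a _ => Finset.sum_nonneg fun y _ => hp s a z' y
    have hNZpos : 0 < ∑ a, ∑ y, p s a z y := lt_of_le_of_ne (hNZnn z) (Ne.symm hz)
    have hpSz : pS p s = ∑ z', ∑ a, ∑ y, p s a z' y := by unfold pS; rw [Finset.sum_comm]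
    have hpSpos : 0 < pS p s := by
      rw [hpSz]
      calc (0:ℝ) < ∑ a, ∑ y, p s a z y := hNZpos
        _ ≤ _ := Finset.single_le_sum (fun z' _ => hNZnn z') (Finset.mem_univ z)
    have hwnn : ∀ z', 0 ≤ wZ p s z' := fun z' => div_nonneg (hNZnn z') hpSpos.le
    have hcompnn : ∀ z' a, 0 ≤ piComp p s z' a := fun z' a =>
      div_nonneg (Finset.sum_nonneg fun y _ => hp s a z' y) (hNZnn z')
    have hcomp1 : ∑ a, piComp p s z a = 1 := by
      unfold piComp
      rw [← Finset.sum_div, div_self hz]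
    have hcompsum : ∀ z', wZ p s z' * (∑ a, piComp p s z' a) = wZ p s z' := by
      intro z'
      by_cases h : (∑ a, ∑ y, p s a z' y) = 0
      · simp [wZ, h, zero_div]
      · unfold piComp
        rw [← Finset.sum_div, div_self h, mul_one]
    have hbar1 : ∑ a, piBar p s a = 1 := by
      unfold piBar
      rw [Finset.sum_comm]
      calc ∑ z', ∑ a, wZ p s z' * piComp p s z' a
          = ∑ z', wZ p s z' * (∑ a, piComp p s z' a) := by
            exact Finset.sum_congr rfl fun z' _ => (Finset.mul_sum _ _ _).symm
        _ = ∑ z', wZ p s z' := Finset.sum_congr rfl fun z' _ => hcompsum z'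
        _ = (∑ z', ∑ a, ∑ y, p s a z' y) / pS p s := by
            unfold wZ; rw [Finset.sum_div]
        _ = 1 := by rw [← hpSz, div_self (ne_of_gt hpSpos)]
    have hbarnn : ∀ a, 0 ≤ piBar p s a := fun a =>
      Finset.sum_nonneg fun z' _ => mul_nonneg (hwnn z') (hcompnn z' a)
    have hsupp : ∀ a, piBar p s a = 0 → piComp p s z a = 0 := by
      intro a hbar0
      have hall := (Finset.sum_eq_zero_iff_of_nonneg
        (fun z' _ => mul_nonneg (hwnn z') (hcompnn z' a))).1 hbar0 z (Finset.mem_univ z)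
      have hwpos : 0 < wZ p s z := div_pos hNZpos hpSpos
      exact (mul_eq_zero.1 hall).resolve_left (ne_of_gt hwpos)
    have hps := pinsker_sum (piComp p s z) (piBar p s) (hcompnn z) hbarnn hcomp1 hbar1 hsupp
    calc wZ p s z * ∑ a, (piComp p s z a - piBar p s a)^2
        ≤ wZ p s z * (2 * ∑ a, piComp p s z a * Real.log (piComp p s z a / piBar p s a)) :=
          mul_le_mul_of_nonneg_left hps (hwnn z)
      _ = 2 * (wZ p s z * ∑ a, piComp p s z a * Real.log (piComp p s z a / piBar p s a)) := by
          ring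

private noncomputable def nAZ (p : σ → α → ζ → υ → ℝ) (s : σ) (a : α) (z : ζ) : ℝ := ∑ y, p s a z y

private noncomputable def nAY (p : σ → α → ζ → υ → ℝ) (s : σ) (a : α) (y : υ) : ℝ := ∑ z, p s a z y

private noncomputable def nZY (p : σ → α → ζ → υ → ℝ) (s : σ) (z : ζ) (y : υ) : ℝ := ∑ a, p s a z y

private noncomputable def nA (p : σ → α → ζ → υ → ℝ) (s : σ) (a : α) : ℝ := ∑ z, ∑ y, p s a z y

private noncomputable def nZ (p : σ → α → ζ → υ → ℝ) (s : σ) (z : ζ) : ℝ := ∑ a, ∑ y, p s a z y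

private noncomputable def nY (p : σ → α → ζ → υ → ℝ) (s : σ) (y : υ) : ℝ := ∑ a, ∑ z, p s a z y

variable (p : σ → α → ζ → υ → ℝ) (s : σ)

private lemma piBar_eq (p : σ → α → ζ → υ → ℝ) (s : σ) (hp : ∀ a z y, 0 ≤ p s a z y) (a : α) :
    piBar p s a = nA p s a / pS p s := by
  unfold piBar wZ piComp
  have : ∀ z, ((∑ a, ∑ y, p s a z y) / pS p s) * ((∑ y, p s a z y) / (∑ a', ∑ y, p s a' z y))
      = (∑ y, p s a z y) / pS p s := by
    intro z
    by_cases hz : (∑ a', ∑ y, p s a' z y) = 0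
    · have h0 : (∑ y, p s a z y) = 0 := by
        have h1 : ∀ a' ∈ Finset.univ, (0:ℝ) ≤ ∑ y, p s a' z y :=
          fun a' _ => Finset.sum_nonneg fun y _ => hp a' z y
        exact (Finset.sum_eq_zero_iff_of_nonneg h1).1 hz a (Finset.mem_univ a)
      rw [h0, zero_div, mul_zero, zero_div]
    · rw [div_mul_div_comm, mul_comm (pS p s), mul_div_mul_left _ _ hz]
  rw [Finset.sum_congr rfl fun z _ => this z, ← Finset.sum_div]
  rfl

private lemma miAZ_tri (p : σ → α → ζ → υ → ℝ) (s : σ) (hp : ∀ a z y, 0 ≤ p s a z y) :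
    miAZ p s = ∑ a, ∑ z, ∑ y, (p s a z y / pS p s) *
      Real.log (nAZ p s a z * pS p s / (nA p s a * nZ p s z)) := by
  rw [Finset.sum_comm]
  unfold miAZ
  apply Finset.sum_congr rfl
  intro z _
  rw [Finset.mul_sum]
  apply Finset.sum_congr rfl
  intro a _
  have hsum : ∑ y, (p s a z y / pS p s) * Real.log (nAZ p s a z * pS p s / (nA p s a * nZ p s z))
      = (nAZ p s a z / pS p s) * Real.log (nAZ p s a z * pS p s / (nA p s a * nZ p s z)) := by
    rw [← Finset.sum_mul, ← Finset.sum_div]; rfl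
  rw [hsum, piBar_eq p s hp]
  unfold wZ piComp
  by_cases hz : (∑ a', ∑ y, p s a' z y) = 0
  · have h0 : (∑ y, p s a z y) = 0 := by
      have h1 : ∀ a' ∈ Finset.univ, (0:ℝ) ≤ ∑ y, p s a' z y :=
        fun a' _ => Finset.sum_nonneg fun y _ => hp a' z y
      exact (Finset.sum_eq_zero_iff_of_nonneg h1).1 hz a (Finset.mem_univ a)
    have h2 : nAZ p s a z = 0 := h0
    rw [h2, h0, hz]; simp
  · have h1 : ((∑ a, ∑ y, p s a z y) / pS p s) * ((∑ y, p s a z y) / (∑ a', ∑ y, p s a' z y))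
        = nAZ p s a z / pS p s := by
      rw [div_mul_div_comm, mul_comm (pS p s), mul_div_mul_left _ _ hz]; rfl
    have h2 : ((∑ y, p s a z y) / (∑ a', ∑ y, p s a' z y)) / (nA p s a / pS p s)
        = nAZ p s a z * pS p s / (nA p s a * nZ p s z) := by
      rw [div_div_div', mul_comm (∑ a', ∑ y, p s a' z y) (nA p s a)]; rfl
    rw [← mul_assoc, h1, h2]

private lemma miAY_tri (p : σ → α → ζ → υ → ℝ) (s : σ) (hT : pS p s ≠ 0) :
    miAY p s = ∑ a, ∑ z, ∑ y, (p s a z y / pS p s) *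
      Real.log (nAY p s a y * pS p s / (nA p s a * nY p s y)) := by
  have step : miAY p s = ∑ a, ∑ y, ∑ z, (p s a z y / pS p s) *
      Real.log (nAY p s a y * pS p s / (nA p s a * nY p s y)) := by
    unfold miAY mi
    apply Finset.sum_congr rfl
    intro a _
    apply Finset.sum_congr rfl
    intro y _
    beta_reduce
    have hrow : (∑ y', (∑ z, p s a z y') / pS p s) = nA p s a / pS p s := by
      rw [← Finset.sum_div]
      congr 1
      exact Finset.sum_comm
    have hcol : (∑ a', (∑ z, p s a' z y) / pS p s) = nY p s y / pS p s := by
      rw [← Finset.sum_div]; rfl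
    rw [hrow, hcol, div_mulmul _ _ _ _ hT, ← Finset.sum_mul, ← Finset.sum_div]
    rfl
  rw [step]
  apply Finset.sum_congr rfl
  intro a _
  exact Finset.sum_comm

private lemma miAZgY_tri (p : σ → α → ζ → υ → ℝ) (s : σ) (hp : ∀ a z y, 0 ≤ p s a z y) :
    miAZgY p s = ∑ a, ∑ z, ∑ y, (p s a z y / pS p s) *
      Real.log (p s a z y * nY p s y / (nAY p s a y * nZY p s z y)) := by
  have step : miAZgY p s = ∑ y, ∑ a, ∑ z, (p s a z y / pS p s) *
      Real.log (p s a z y * nY p s y / (nAY p s a y * nZY p s z y)) := by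
    unfold miAZgY mi
    apply Finset.sum_congr rfl
    intro y _
    by_cases hy : nY p s y = 0
    · have hz0 : ∀ a z, p s a z y = 0 := by
        intro a z
        have h1 : ∀ a' ∈ Finset.univ, (0:ℝ) ≤ ∑ z', p s a' z' y :=
          fun a' _ => Finset.sum_nonneg fun z' _ => hp a' z' y
        have h2 := (Finset.sum_eq_zero_iff_of_nonneg h1).1 hy a (Finset.mem_univ a)
        have h3 : ∀ z' ∈ Finset.univ, (0:ℝ) ≤ p s a z' y := fun z' _ => hp a z' y
        exact (Finset.sum_eq_zero_iff_of_nonneg h3).1 h2 z (Finset.mem_univ z)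
      have hy' : (∑ a, ∑ z, p s a z y) = 0 := hy
      rw [hy']
      rw [zero_div, zero_mul]
      symm
      apply Finset.sum_eq_zero
      intro a _
      apply Finset.sum_eq_zero
      intro z _
      rw [hz0 a z, zero_div, zero_mul]
    · have hy' : (∑ a', ∑ z', p s a' z' y) = nY p s y := rfl
      rw [hy', Finset.mul_sum]
      apply Finset.sum_congr rfl
      intro a _
      rw [Finset.mul_sum]
      apply Finset.sum_congr rfl
      intro z _
      have hrow : (∑ z', p s a z' y / nY p s y) = nAY p s a y / nY p s y := by
        rw [← Finset.sum_div]; rfl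
      have hcol : (∑ a', p s a' z y / nY p s y) = nZY p s z y / nY p s y := by
        rw [← Finset.sum_div]; rfl
      rw [hrow, hcol, div_mulmul _ _ _ _ hy, ← mul_assoc]
      congr 1
      rw [div_mul_div_comm, mul_comm (pS p s), mul_div_mul_left _ _ hy]
  rw [step, Finset.sum_comm]
  apply Finset.sum_congr rfl
  intro a _
  exact Finset.sum_comm

private lemma log_identity (p : σ → α → ζ → υ → ℝ) (s : σ) (hp : ∀ a z y, 0 ≤ p s a z y)
    (a : α) (z : ζ) (y : υ) :
    (p s a z y / pS p s) * Real.log (nAY p s a y * pS p s / (nA p s a * nY p s y)) +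
      (p s a z y / pS p s) * Real.log (p s a z y * nY p s y / (nAY p s a y * nZY p s z y)) =
    (p s a z y / pS p s) * Real.log (nAZ p s a z * pS p s / (nA p s a * nZ p s z)) +
      (p s a z y / pS p s) * Real.log (p s a z y * nZ p s z / (nAZ p s a z * nZY p s z y)) := by
  rcases eq_or_lt_of_le (hp a z y) with hN|hN
  · rw [← hN]; simp
  · have hAZ : 0 < nAZ p s a z :=
      lt_of_lt_of_le hN (Finset.single_le_sum (fun y' _ => hp a z y') (Finset.mem_univ y))
    have hAY : 0 < nAY p s a y :=
      lt_of_lt_of_le hN (Finset.single_le_sum (fun z' _ => hp a z' y) (Finset.mem_univ z))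
    have hZY : 0 < nZY p s z y :=
      lt_of_lt_of_le hN (Finset.single_le_sum (fun a' _ => hp a' z y) (Finset.mem_univ a))
    have hA : 0 < nA p s a :=
      lt_of_lt_of_le hAZ (Finset.single_le_sum
        (fun z' _ => Finset.sum_nonneg fun y' _ => hp a z' y') (Finset.mem_univ z))
    have hZ : 0 < nZ p s z :=
      lt_of_lt_of_le hAZ (Finset.single_le_sum
        (fun a' _ => Finset.sum_nonneg fun y' _ => hp a' z y') (Finset.mem_univ a))
    have hY : 0 < nY p s y :=
      lt_of_lt_of_le hAY (Finset.single_le_sum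
        (fun a' _ => Finset.sum_nonneg fun z' _ => hp a' z' y) (Finset.mem_univ a))
    have hT : 0 < pS p s :=
      lt_of_lt_of_le hA (Finset.single_le_sum
        (fun a' _ => Finset.sum_nonneg fun z' _ => Finset.sum_nonneg fun y' _ => hp a' z' y')
        (Finset.mem_univ a))
    rw [← mul_add, ← mul_add]
    congr 1
    rw [Real.log_div (by positivity) (by positivity), Real.log_div (by positivity) (by positivity),
      Real.log_div (by positivity) (by positivity), Real.log_div (by positivity) (by positivity),
      Real.log_mul (by positivity) (by positivity), Real.log_mul (by positivity) (by positivity),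
      Real.log_mul (by positivity) (by positivity), Real.log_mul (by positivity) (by positivity),
      Real.log_mul (by positivity) (by positivity), Real.log_mul (by positivity) (by positivity),
      Real.log_mul (by positivity) (by positivity), Real.log_mul (by positivity) (by positivity)]
    ring

private lemma E_nonneg (p : σ → α → ζ → υ → ℝ) (s : σ) (hp : ∀ a z y, 0 ≤ p s a z y) (hT : 0 < pS p s) :
    0 ≤ ∑ a, ∑ z, ∑ y, (p s a z y / pS p s) *
      Real.log (p s a z y * nZ p s z / (nAZ p s a z * nZY p s z y)) := by
  rw [Finset.sum_comm]
  apply Finset.sum_nonneg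
  intro z _
  by_cases hz : nZ p s z = 0
  · have hz0 : ∀ a y, p s a z y = 0 := by
      intro a y
      have h1 : ∀ a' ∈ Finset.univ, (0:ℝ) ≤ ∑ y', p s a' z y' :=
        fun a' _ => Finset.sum_nonneg fun y' _ => hp a' z y'
      have h2 := (Finset.sum_eq_zero_iff_of_nonneg h1).1 hz a (Finset.mem_univ a)
      have h3 : ∀ y' ∈ Finset.univ, (0:ℝ) ≤ p s a z y' := fun y' _ => hp a z y'
      exact (Finset.sum_eq_zero_iff_of_nonneg h3).1 h2 y (Finset.mem_univ y)
    apply le_of_eq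
    symm
    apply Finset.sum_eq_zero; intro a _
    apply Finset.sum_eq_zero; intro y _
    rw [hz0 a y, zero_div, zero_mul]
  · have key : ∀ a y, p s a z y - nAZ p s a z * nZY p s z y / nZ p s z ≤
        p s a z y * Real.log (p s a z y / (nAZ p s a z * nZY p s z y / nZ p s z)) := by
      intro a y
      have hznn : (0:ℝ) ≤ nZ p s z :=
        Finset.sum_nonneg fun a' _ => Finset.sum_nonneg fun y' _ => hp a' z y'
      apply gibbs_pt (hp a z y)
        (div_nonneg (mul_nonneg (Finset.sum_nonneg fun y' _ => hp a z y')
          (Finset.sum_nonneg fun a' _ => hp a' z y)) hznn)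
      intro hg0
      rcases mul_eq_zero.1 ((div_eq_zero_iff.1 hg0).resolve_right hz) with h|h
      · exact le_antisymm
          (h ▸ Finset.single_le_sum (fun y' _ => hp a z y') (Finset.mem_univ y)) (hp a z y)
      · exact le_antisymm
          (h ▸ Finset.single_le_sum (fun a' _ => hp a' z y) (Finset.mem_univ a)) (hp a z y)
    have hsum1 : ∑ a, ∑ y, (p s a z y - nAZ p s a z * nZY p s z y / nZ p s z) = 0 := by
      rw [show (∑ a, ∑ y, (p s a z y - nAZ p s a z * nZY p s z y / nZ p s z))
          = (∑ a, ∑ y, p s a z y) - ∑ a, ∑ y, nAZ p s a z * nZY p s z y / nZ p s z from by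
        rw [← Finset.sum_sub_distrib]
        exact Finset.sum_congr rfl fun a _ => Finset.sum_sub_distrib _ _]
      have h1 : ∑ a, ∑ y, nAZ p s a z * nZY p s z y / nZ p s z = nZ p s z := by
        have h2 : ∀ a, ∑ y, nAZ p s a z * nZY p s z y / nZ p s z
            = nAZ p s a z * (∑ y, nZY p s z y) / nZ p s z := by
          intro a
          rw [← Finset.sum_div, ← Finset.mul_sum]
        rw [Finset.sum_congr rfl fun a _ => h2 a, ← Finset.sum_div, ← Finset.sum_mul]
        have h3 : (∑ y, nZY p s z y) = nZ p s z := by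
          unfold nZY nZ
          exact Finset.sum_comm
        have h4 : (∑ a, nAZ p s a z) = nZ p s z := rfl
        rw [h3, h4, mul_div_assoc, div_self hz, mul_one]
      have h5 : ∑ a, ∑ y, p s a z y = nZ p s z := rfl
      rw [h1, h5, sub_self]
    have hsum2 : 0 ≤ ∑ a, ∑ y, p s a z y *
        Real.log (p s a z y / (nAZ p s a z * nZY p s z y / nZ p s z)) := by
      have h6 := Finset.sum_le_sum fun a (_ : a ∈ Finset.univ) =>
        Finset.sum_le_sum fun y (_ : y ∈ Finset.univ) => key a y
      rw [hsum1] at h6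
      exact h6
    have heq : ∑ a, ∑ y, (p s a z y / pS p s) *
        Real.log (p s a z y * nZ p s z / (nAZ p s a z * nZY p s z y))
        = (∑ a, ∑ y, p s a z y *
            Real.log (p s a z y / (nAZ p s a z * nZY p s z y / nZ p s z))) / pS p s := by
      rw [Finset.sum_div]
      apply Finset.sum_congr rfl; intro a _
      rw [Finset.sum_div]
      apply Finset.sum_congr rfl; intro y _
      rw [div_mul_eq_mul_div, div_div_eq_mul_div]
    rw [heq]
    exact div_nonneg hsum2 hT.le

private lemma partB (p : σ → α → ζ → υ → ℝ) (s : σ) (hp : ∀ a z y, 0 ≤ p s a z y)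
    (hT : 0 < pS p s) (h0 : miAZgY p s = 0) : miAZ p s ≤ miAY p s := by
  have hAZ := miAZ_tri p s hp
  have hAY := miAY_tri p s (ne_of_gt hT)
  have hgy := miAZgY_tri p s hp
  have hE := E_nonneg p s hp hT
  have hid : (∑ a, ∑ z, ∑ y, (p s a z y / pS p s) *
        Real.log (nAY p s a y * pS p s / (nA p s a * nY p s y)))
      + (∑ a, ∑ z, ∑ y, (p s a z y / pS p s) *
        Real.log (p s a z y * nY p s y / (nAY p s a y * nZY p s z y)))
      = (∑ a, ∑ z, ∑ y, (p s a z y / pS p s) *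
        Real.log (nAZ p s a z * pS p s / (nA p s a * nZ p s z)))
      + (∑ a, ∑ z, ∑ y, (p s a z y / pS p s) *
        Real.log (p s a z y * nZ p s z / (nAZ p s a z * nZY p s z y))) := by
    simp only [← Finset.sum_add_distrib]
    apply Finset.sum_congr rfl; intro a _
    apply Finset.sum_congr rfl; intro z _
    apply Finset.sum_congr rfl; intro y _
    exact log_identity p s hp a z y
  rw [hAZ, hAY]
  rw [hgy] at h0
  linarith


/-- **Expressivity Theorem, L2 case.**
For each state `s`, with weights `w_i(s)`, component distributions `π_i^s` and mixture
`π̄^s`, the L2 divergence satisfies `D_2(Z|s) ≤ 2 I(A; Z | S = s)`.  Consequently, if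
additionally `I(A; Z | Ỹ, S = s) = 0` for every `s`, then
`E_{S∼d_π}[D_2(Z|S)] ≤ 2 I(A; Z | S) ≤ 2 I(A; Ỹ | S)`. -/
theorem stmt14 (p : σ → α → ζ → υ → ℝ)
    (hp : ∀ s a z y, 0 ≤ p s a z y)
    (hpsum : ∑ s, ∑ a, ∑ z, ∑ y, p s a z y = 1) :
    (∀ s, D2 p s ≤ 2 * miAZ p s) ∧
      ((∀ s, miAZgY p s = 0) →
        (∑ s, pS p s * D2 p s) ≤ 2 * (∑ s, pS p s * miAZ p s) ∧
          2 * (∑ s, pS p s * miAZ p s) ≤ 2 * ∑ s, pS p s * miAY p s) := by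
  refine ⟨part1 p hp, fun H => ⟨?_, ?_⟩⟩
  · rw [Finset.mul_sum]
    apply Finset.sum_le_sum
    intro s _
    have h2 : 0 ≤ pS p s :=
      Finset.sum_nonneg fun a _ => Finset.sum_nonneg fun z _ =>
        Finset.sum_nonneg fun y _ => hp s a z y
    calc pS p s * D2 p s ≤ pS p s * (2 * miAZ p s) :=
          mul_le_mul_of_nonneg_left (part1 p hp s) h2
      _ = 2 * (pS p s * miAZ p s) := by ring
  · have hle : ∀ s ∈ Finset.univ, pS p s * miAZ p s ≤ pS p s * miAY p s := by
      intro s _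
      have h2 : 0 ≤ pS p s :=
        Finset.sum_nonneg fun a _ => Finset.sum_nonneg fun z _ =>
          Finset.sum_nonneg fun y _ => hp s a z y
      rcases eq_or_lt_of_le h2 with h|h
      · rw [← h, zero_mul, zero_mul]
      · exact mul_le_mul_of_nonneg_left
          (partB p s (fun a z y => hp s a z y) h (H s)) h.le
    have := Finset.sum_le_sum hle
    linarith


end Expressivity
end
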